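/- R satisfies the cubic relation: for all ℏ, η, z₁, z₂, z₃ ∈ ℂ, R^ℏ_{12}(z₁−z₂) R^η_{13}(z₁−z₃) R^ℏ_{23}(z₂−z₃) − R^η_{23}(z₂−z₃) R^ℏ_{13}(z₁−z₃) R^η_{12}(z₁−z₂) = (E(ℏ) − E(η)) · R^{ℏ+η}_{13}(z₁−z₃) in Mat_N(ℂ)^{⊗3}. -/

import Mathlib

open Matrix Kronecker BigOperators

/-- The permutation operator `P₁₂ = Σ_{i,j} e_{ij} ⊗ e_{ji}` on `ℂ^N ⊗ ℂ^N`. -/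
def Perm (N : ℕ) : Matrix (Fin N × Fin N) (Fin N × Fin N) ℂ :=
  Matrix.of fun p q => if p.1 = q.2 ∧ p.2 = q.1 then 1 else 0

/-- Embedding `X ↦ X₁₂` of `Mat_N ⊗ Mat_N` into the tensor factors 1,2 of `Mat_N^{⊗3}`. -/
def e12 {N : ℕ} (X : Matrix (Fin N × Fin N) (Fin N × Fin N) ℂ) :
    Matrix (Fin N × Fin N × Fin N) (Fin N × Fin N × Fin N) ℂ :=
  Matrix.of fun p q =>
    X (p.1, p.2.1) (q.1, q.2.1) * (if p.2.2 = q.2.2 then (1 : ℂ) else 0)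

/-- Embedding `X ↦ X₁₃` of `Mat_N ⊗ Mat_N` into the tensor factors 1,3 of `Mat_N^{⊗3}`. -/
def e13 {N : ℕ} (X : Matrix (Fin N × Fin N) (Fin N × Fin N) ℂ) :
    Matrix (Fin N × Fin N × Fin N) (Fin N × Fin N × Fin N) ℂ :=
  Matrix.of fun p q =>
    X (p.1, p.2.2) (q.1, q.2.2) * (if p.2.1 = q.2.1 then (1 : ℂ) else 0)

/-- Embedding `X ↦ X₂₃` of `Mat_N ⊗ Mat_N` into the tensor factors 2,3 of `Mat_N^{⊗3}`. -/
def e23 {N : ℕ} (X : Matrix (Fin N × Fin N) (Fin N × Fin N) ℂ) :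
    Matrix (Fin N × Fin N × Fin N) (Fin N × Fin N × Fin N) ℂ :=
  Matrix.of fun p q =>
    X (p.2.1, p.2.2) (q.2.1, q.2.2) * (if p.1 = q.1 then (1 : ℂ) else 0)



/-!
Conjugating the associative Yang–Baxter equation at `(-ℏ, η, z₂, z₁, z₃)` by `P₁₂` and using
skew-symmetry gives `R^ℏ₁₂ R^η₁₃ = R^η₂₃ R^{ℏ+η}₁₂ - R^{ℏ+η}₁₃ R^{-ℏ}₂₃`. Multiplying on the right
by `R^ℏ₂₃`, the equation at `(ℏ + η, ℏ)` turns the first term into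
`R^η₂₃ R^ℏ₁₃ R^η₁₂ + R^η₂₃ R^{-η}₂₃ R^{ℏ+η}₁₃`, and unitarity in the form
`R^a(z) R^{-a}(z) = R^{-a}(z) R^a(z) = (E z - E a) • 1` leaves `(E ℏ - E η) • R^{ℏ+η}₁₃`.
-/

local notation "𝕄" N => Matrix (Fin N × Fin N) (Fin N × Fin N) ℂ

variable {N : ℕ}

lemma conj_mul_of_mul_self_eq_one {A : Type*} [Ring A] {Q : A} (hQ : Q * Q = 1) (X Y : A) :
    Q * (X * Y) * Q = (Q * X * Q) * (Q * Y * Q) := by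
  rw [show Q * X * Q * (Q * Y * Q) = Q * X * (Q * Q) * (Y * Q) by noncomm_ring, hQ]
  noncomm_ring

lemma Perm_mul_Perm : Perm N * Perm N = 1 := by
  ext ⟨i, j⟩ ⟨k, l⟩
  simp [Perm, mul_apply, Fintype.sum_prod_type, one_apply, Prod.ext_iff, ite_and, eq_comm]

section LegEmbeddings

variable (X Y : 𝕄 N)

lemma e12_mul : e12 (X * Y) = e12 X * e12 Y := by
  ext ⟨i, j, k⟩ ⟨i', j', k'⟩
  simp [e12, mul_apply, Fintype.sum_prod_type, mul_ite, ite_mul]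

lemma e23_mul : e23 (X * Y) = e23 X * e23 Y := by
  ext ⟨i, j, k⟩ ⟨i', j', k'⟩
  simp [e23, mul_apply, Fintype.sum_prod_type, mul_ite, ite_mul]

lemma e12_one : e12 (1 : 𝕄 N) = 1 := by
  ext ⟨i, j, k⟩ ⟨i', j', k'⟩
  simp only [e12, of_apply, one_apply, Prod.ext_iff, ite_and]
  split_ifs <;> simp_all

lemma e23_smul_one (c : ℂ) : e23 (c • (1 : 𝕄 N)) = c • 1 := by
  ext ⟨i, j, k⟩ ⟨i', j', k'⟩
  simp only [e23, of_apply, Matrix.smul_apply, one_apply, Prod.ext_iff, ite_and]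
  split_ifs <;> simp_all

lemma e12_neg : e12 (-X) = -e12 X := by
  ext p q
  simp only [e12, of_apply, Matrix.neg_apply, neg_mul]

lemma e12_Perm_mul_e13_mul_e12_Perm : e12 (Perm N) * e13 X * e12 (Perm N) = e23 X := by
  ext ⟨i, j, k⟩ ⟨i', j', k'⟩
  simp [e12, e13, e23, Perm, mul_apply, Fintype.sum_prod_type, mul_ite, ite_mul, ite_and,
    eq_comm]

lemma e12_Perm_mul_e23_mul_e12_Perm : e12 (Perm N) * e23 X * e12 (Perm N) = e13 X := by
  ext ⟨i, j, k⟩ ⟨i', j', k'⟩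
  simp [e12, e13, e23, Perm, mul_apply, Fintype.sum_prod_type, mul_ite, ite_mul, ite_and,
    eq_comm]

end LegEmbeddings

def SatisfiesAYBE (R : ℂ → ℂ → 𝕄 N) : Prop :=
  ∀ ℏ η z₁ z₂ z₃ : ℂ,
    e12 (R ℏ (z₁ - z₂)) * e23 (R η (z₂ - z₃)) =
      e13 (R η (z₁ - z₃)) * e12 (R (ℏ - η) (z₁ - z₂)) +
        e23 (R (η - ℏ) (z₂ - z₃)) * e13 (R ℏ (z₁ - z₃))

def IsSkewSymmetric (R : ℂ → ℂ → 𝕄 N) : Prop :=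
  ∀ ℏ z : ℂ, R ℏ z = -(Perm N * R (-ℏ) (-z) * Perm N)

def IsUnitary (R : ℂ → ℂ → 𝕄 N) (E : ℂ → ℂ) : Prop :=
  ∀ ℏ z : ℂ, R ℏ z * (Perm N * R ℏ (-z) * Perm N) = (E ℏ - E z) • (1 : 𝕄 N)

section RMatrix

variable {R : ℂ → ℂ → 𝕄 N} {E : ℂ → ℂ}

lemma IsSkewSymmetric.Perm_mul_mul_Perm (hskew : IsSkewSymmetric R) (ℏ z : ℂ) :
    Perm N * R ℏ z * Perm N = -R (-ℏ) (-z) := by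
  rw [hskew (-ℏ) (-z), neg_neg, neg_neg, neg_neg]

lemma IsSkewSymmetric.e12_Perm_mul_e12_mul_e12_Perm (hskew : IsSkewSymmetric R) (ℏ z : ℂ) :
    e12 (Perm N) * e12 (R ℏ z) * e12 (Perm N) = -e12 (R (-ℏ) (-z)) := by
  rw [← e12_mul, ← e12_mul, hskew.Perm_mul_mul_Perm, e12_neg]

lemma IsUnitary.apply_mul_apply_neg (hskew : IsSkewSymmetric R) (hunit : IsUnitary R E)
    (ℏ z : ℂ) :
    R ℏ z * R (-ℏ) z = (E z - E ℏ) • 1 := by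
  have h := hunit ℏ z
  rw [hskew.Perm_mul_mul_Perm, neg_neg, mul_neg, neg_eq_iff_eq_neg, ← neg_smul, neg_sub] at h
  exact h

/-- Conjugating `R ℏ (-z) * R (-ℏ) (-z) = (E (-z) - E ℏ) • 1` by `P₁₂`. -/
lemma IsUnitary.apply_neg_mul_apply' (hskew : IsSkewSymmetric R) (hunit : IsUnitary R E)
    (ℏ z : ℂ) :
    R (-ℏ) z * R ℏ z = (E (-z) - E ℏ) • 1 := by
  have h := congrArg (fun M => Perm N * M * Perm N) (hunit.apply_mul_apply_neg hskew ℏ (-z))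
  simp only [conj_mul_of_mul_self_eq_one Perm_mul_Perm, hskew.Perm_mul_mul_Perm, neg_neg,
    neg_mul_neg, mul_smul_comm, smul_mul_assoc, mul_one, Perm_mul_Perm] at h
  exact h

lemma IsUnitary.E_neg_smul_one (hskew : IsSkewSymmetric R) (hunit : IsUnitary R E) (z : ℂ) :
    E (-z) • (1 : 𝕄 N) = E z • 1 := by
  have h := hunit.apply_mul_apply_neg hskew (-z) z
  rw [neg_neg, hunit.apply_neg_mul_apply' hskew] at h
  linear_combination (norm := module) (1 / 2 : ℂ) • h

lemma IsUnitary.apply_neg_mul_apply (hskew : IsSkewSymmetric R) (hunit : IsUnitary R E)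
    (ℏ z : ℂ) :
    R (-ℏ) z * R ℏ z = (E z - E ℏ) • 1 := by
  rw [hunit.apply_neg_mul_apply' hskew, sub_smul, hunit.E_neg_smul_one hskew, ← sub_smul]

lemma SatisfiesAYBE.e12_mul_e13 (hAYBE : SatisfiesAYBE R) (hskew : IsSkewSymmetric R)
    (ℏ η z₁ z₂ z₃ : ℂ) :
    e12 (R ℏ (z₁ - z₂)) * e13 (R η (z₁ - z₃)) =
      e23 (R η (z₂ - z₃)) * e12 (R (ℏ + η) (z₁ - z₂)) -
        e13 (R (ℏ + η) (z₁ - z₃)) * e23 (R (-ℏ) (z₂ - z₃)) := by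
  have h := congrArg (fun M => e12 (Perm N) * M * e12 (Perm N)) (hAYBE (-ℏ) η z₂ z₁ z₃)
  have hPP : e12 (Perm N) * e12 (Perm N) = 1 := by rw [← e12_mul, Perm_mul_Perm, e12_one]
  simp only [mul_add, add_mul, conj_mul_of_mul_self_eq_one hPP,
    hskew.e12_Perm_mul_e12_mul_e12_Perm, e12_Perm_mul_e13_mul_e12_Perm,
    e12_Perm_mul_e23_mul_e12_Perm, neg_neg, neg_sub,
    show -ℏ - η = -(ℏ + η) by ring, show η - -ℏ = ℏ + η by ring, neg_mul, mul_neg] at h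
  rw [← neg_neg (e12 _ * _), h]
  noncomm_ring

end RMatrix

theorem cubic_relation_general (N : ℕ)
    (R : ℂ → ℂ → Matrix (Fin N × Fin N) (Fin N × Fin N) ℂ) (E : ℂ → ℂ)
    (hAYBE : ∀ ℏ η z₁ z₂ z₃ : ℂ,
      e12 (R ℏ (z₁ - z₂)) * e23 (R η (z₂ - z₃)) =
        e13 (R η (z₁ - z₃)) * e12 (R (ℏ - η) (z₁ - z₂)) +
          e23 (R (η - ℏ) (z₂ - z₃)) * e13 (R ℏ (z₁ - z₃)))
    (hskew : ∀ ℏ z : ℂ, R ℏ z = -(Perm N * R (-ℏ) (-z) * Perm N))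
    (hunit : ∀ ℏ z : ℂ, R ℏ z * (Perm N * R ℏ (-z) * Perm N) =
      (E ℏ - E z) • (1 : Matrix (Fin N × Fin N) (Fin N × Fin N) ℂ))
    (ℏ η z₁ z₂ z₃ : ℂ) :
    e12 (R ℏ (z₁ - z₂)) * e13 (R η (z₁ - z₃)) * e23 (R ℏ (z₂ - z₃)) -
        e23 (R η (z₂ - z₃)) * e13 (R ℏ (z₁ - z₃)) * e12 (R η (z₁ - z₂)) =
      (E ℏ - E η) • e13 (R (ℏ + η) (z₁ - z₃)) := by
  have hunitη : e23 (R η (z₂ - z₃)) * e23 (R (-η) (z₂ - z₃)) = (E (z₂ - z₃) - E η) • 1 := by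
    rw [← e23_mul, IsUnitary.apply_mul_apply_neg hskew hunit, e23_smul_one]
  have hunitℏ : e23 (R (-ℏ) (z₂ - z₃)) * e23 (R ℏ (z₂ - z₃)) = (E (z₂ - z₃) - E ℏ) • 1 := by
    rw [← e23_mul, IsUnitary.apply_neg_mul_apply hskew hunit, e23_smul_one]
  have hAYBE₂ := hAYBE (ℏ + η) ℏ z₁ z₂ z₃
  rw [add_sub_cancel_left, sub_add_cancel_left] at hAYBE₂
  calc _ = e23 (R η (z₂ - z₃)) * (e12 (R (ℏ + η) (z₁ - z₂)) * e23 (R ℏ (z₂ - z₃))) -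
          e13 (R (ℏ + η) (z₁ - z₃)) * (e23 (R (-ℏ) (z₂ - z₃)) * e23 (R ℏ (z₂ - z₃))) -
          e23 (R η (z₂ - z₃)) * e13 (R ℏ (z₁ - z₃)) * e12 (R η (z₁ - z₂)) := by
        rw [SatisfiesAYBE.e12_mul_e13 hAYBE hskew]; noncomm_ring
    _ = (e23 (R η (z₂ - z₃)) * e23 (R (-η) (z₂ - z₃))) * e13 (R (ℏ + η) (z₁ - z₃)) -
          e13 (R (ℏ + η) (z₁ - z₃)) * (e23 (R (-ℏ) (z₂ - z₃)) * e23 (R ℏ (z₂ - z₃))) := by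
        rw [hAYBE₂]; noncomm_ring
    _ = _ := by
        rw [hunitη, hunitℏ, smul_mul_assoc, mul_smul_comm, one_mul, mul_one,
          ← sub_smul, sub_sub_sub_cancel_left]

/-- The cubic relation for a unitary skew-symmetric solution of the associative
Yang–Baxter equation. -/
theorem cubic_relation (N : ℕ) (hN : 1 ≤ N)
    (R : ℂ → ℂ → Matrix (Fin N × Fin N) (Fin N × Fin N) ℂ) (E : ℂ → ℂ)
    (hAYBE : ∀ ℏ η z₁ z₂ z₃ : ℂ,
      e12 (R ℏ (z₁ - z₂)) * e23 (R η (z₂ - z₃)) =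
        e13 (R η (z₁ - z₃)) * e12 (R (ℏ - η) (z₁ - z₂)) +
          e23 (R (η - ℏ) (z₂ - z₃)) * e13 (R ℏ (z₁ - z₃)))
    (hskew : ∀ ℏ z : ℂ, R ℏ z = -(Perm N * R (-ℏ) (-z) * Perm N))
    (hunit : ∀ ℏ z : ℂ, R ℏ z * (Perm N * R ℏ (-z) * Perm N) =
      (E ℏ - E z) • (1 : Matrix (Fin N × Fin N) (Fin N × Fin N) ℂ))
    (ℏ η z₁ z₂ z₃ : ℂ) :
    e12 (R ℏ (z₁ - z₂)) * e13 (R η (z₁ - z₃)) * e23 (R ℏ (z₂ - z₃)) -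
        e23 (R η (z₂ - z₃)) * e13 (R ℏ (z₁ - z₃)) * e12 (R η (z₁ - z₂)) =
      (E ℏ - E η) • e13 (R (ℏ + η) (z₁ - z₃)) :=
  cubic_relation_general N R E hAYBE hskew hunit ℏ η z₁ z₂ z₃
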